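/- Every rook circuit on a 2n × 2n chessboard has at least 4n turn-cells. -/

import Mathlib

/-- The grid graph on an `n × m` board: vertices are cells `(row, column)`,
edges join orthogonally adjacent cells. -/
def gridGraph (n m : ℕ) : SimpleGraph (Fin n × Fin m) :=
  SimpleGraph.fromRel (fun a b =>
    (a.1 = b.1 ∧ (a.2 : ℕ) + 1 = (b.2 : ℕ)) ∨
    (a.2 = b.2 ∧ (a.1 : ℕ) + 1 = (b.1 : ℕ)))

/-- An edge is horizontal if its endpoints lie in the same row. -/
def horizEdge {n m : ℕ} (e : Sym2 (Fin n × Fin m)) : Prop :=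
  ∃ a b : Fin n × Fin m, e = s(a, b) ∧ a.1 = b.1

/-- An edge is vertical if its endpoints lie in the same column. -/
def vertEdge {n m : ℕ} (e : Sym2 (Fin n × Fin m)) : Prop :=
  ∃ a b : Fin n × Fin m, e = s(a, b) ∧ a.2 = b.2

/-- A cell is a turn-cell if it has an incident horizontal cycle edge and an
incident vertical cycle edge. -/
def IsTurnCell {n m : ℕ} {v₀ : Fin n × Fin m} (w : (gridGraph n m).Walk v₀ v₀)
    (v : Fin n × Fin m) : Prop :=
  (∃ e ∈ w.edges, v ∈ e ∧ horizEdge e) ∧ (∃ e ∈ w.edges, v ∈ e ∧ vertEdge e)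

/-- A cell is a straight-cell if all its incident cycle edges are horizontal,
or all are vertical. -/
def IsStraightCell {n m : ℕ} {v₀ : Fin n × Fin m} (w : (gridGraph n m).Walk v₀ v₀)
    (v : Fin n × Fin m) : Prop :=
  (∀ e ∈ w.edges, v ∈ e → horizEdge e) ∨ (∀ e ∈ w.edges, v ∈ e → vertEdge e)

open SimpleGraph Walk

/-! ### Generic facts about cycles -/

lemma RC.cycle_start_two_edges {V : Type*} {G : SimpleGraph V} {v : V} {c : G.Walk v v}
    (hc : c.IsCycle) :
    ∃ e₁ ∈ c.edges, ∃ e₂ ∈ c.edges, v ∈ e₁ ∧ v ∈ e₂ ∧ e₁ ≠ e₂ := by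
  have h3 := hc.three_le_length
  have hnd := hc.isTrail.edges_nodup
  cases c with
  | nil => simp at h3
  | @cons _ u _ h p =>
    refine ⟨s(v, u), by simp, ?_⟩
    have hpne : p.darts ≠ [] := by
      intro hnil
      have hl := p.length_darts
      rw [hnil] at hl
      simp only [List.length_nil] at hl
      simp only [Walk.length_cons] at h3
      omega
    set d := p.darts.getLast hpne with hd
    have hdsnd : d.snd = v := by rw [hd, p.getLast_darts_eq_lastDart hpne]; simp
    refine ⟨d.edge, ?_, by simp, ?_, ?_⟩
    · simp only [Walk.edges_cons]
      right
      exact List.mem_map_of_mem (List.getLast_mem hpne)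
    · rw [← hdsnd]; exact Sym2.mem_mk_right _ _
    · intro he
      have hmem : d.edge ∈ p.edges := List.mem_map_of_mem (List.getLast_mem hpne)
      rw [Walk.edges_cons] at hnd
      exact (List.nodup_cons.mp hnd).1 (he ▸ hmem)

lemma RC.two_incident {V : Type*} [DecidableEq V] {G : SimpleGraph V} {v₀ : V}
    {w : G.Walk v₀ v₀} (hw : w.IsCycle) {v : V} (hv : v ∈ w.support) :
    ∃ e₁ ∈ w.edges, ∃ e₂ ∈ w.edges, v ∈ e₁ ∧ v ∈ e₂ ∧ e₁ ≠ e₂ := by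
  obtain ⟨e₁, he₁, e₂, he₂, h1, h2, hne⟩ := RC.cycle_start_two_edges (hc := hw.rotate hv)
  have hperm := (w.rotate_edges v hv).perm
  exact ⟨e₁, hperm.mem_iff.mp he₁, e₂, hperm.mem_iff.mp he₂, h1, h2, hne⟩

/-! ### Grid edge structure -/

lemma RC.horizEdge_mk {n m : ℕ} {a b : Fin n × Fin m} : horizEdge s(a, b) ↔ a.1 = b.1 := by
  constructor
  · rintro ⟨x, y, h, hxy⟩
    rcases Sym2.eq_iff.mp h with ⟨rfl, rfl⟩ | ⟨rfl, rfl⟩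
    · exact hxy
    · exact hxy.symm
  · intro h; exact ⟨a, b, rfl, h⟩

lemma RC.vertEdge_mk {n m : ℕ} {a b : Fin n × Fin m} : vertEdge s(a, b) ↔ a.2 = b.2 := by
  constructor
  · rintro ⟨x, y, h, hxy⟩
    rcases Sym2.eq_iff.mp h with ⟨rfl, rfl⟩ | ⟨rfl, rfl⟩
    · exact hxy
    · exact hxy.symm
  · intro h; exact ⟨a, b, rfl, h⟩

lemma RC.grid_adj_cases {n m : ℕ} {a b : Fin n × Fin m} (h : (gridGraph n m).Adj a b) :
    (a.1 = b.1 ∧ ((a.2 : ℕ) + 1 = b.2 ∨ (b.2 : ℕ) + 1 = a.2)) ∨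
    (a.2 = b.2 ∧ ((a.1 : ℕ) + 1 = b.1 ∨ (b.1 : ℕ) + 1 = a.1)) := by
  rw [gridGraph, SimpleGraph.fromRel_adj] at h
  obtain ⟨-, h⟩ := h
  tauto

lemma RC.incident_cases {n m : ℕ} {v₀ : Fin n × Fin m} {w : (gridGraph n m).Walk v₀ v₀}
    {e : Sym2 (Fin n × Fin m)} (he : e ∈ w.edges) {v : Fin n × Fin m} (hv : v ∈ e) :
    ∃ u, e = s(v, u) ∧ (gridGraph n m).Adj v u := by
  obtain ⟨u, rfl⟩ := Sym2.mem_iff_exists.mp hv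
  exact ⟨u, rfl, w.adj_of_mem_edges he⟩

/-! ### A vertex with a unique incident horizontal edge is a turn cell -/

lemma RC.turn_of_unique_horiz {n m : ℕ} {v₀ : Fin n × Fin m} {w : (gridGraph n m).Walk v₀ v₀}
    (hw : w.IsCycle) {v : Fin n × Fin m} {e₁ : Sym2 (Fin n × Fin m)}
    (he₁ : e₁ ∈ w.edges) (hv₁ : v ∈ e₁) (hh₁ : horizEdge e₁)
    (huniq : ∀ f ∈ w.edges, v ∈ f → horizEdge f → f = e₁) :
    IsTurnCell w v := by
  classical
  refine ⟨⟨e₁, he₁, hv₁, hh₁⟩, ?_⟩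
  have hvsup : v ∈ w.support := by
    obtain ⟨u, rfl, -⟩ := RC.incident_cases he₁ hv₁
    exact w.fst_mem_support_of_mem_edges he₁
  obtain ⟨f₁, hf₁, f₂, hf₂, hm₁, hm₂, hne⟩ := RC.two_incident hw hvsup
  have key : ∀ f ∈ w.edges, v ∈ f → f ≠ e₁ → ∃ e ∈ w.edges, v ∈ e ∧ vertEdge e := by
    intro f hf hm hfe
    obtain ⟨u, rfl, hadj⟩ := RC.incident_cases hf hm
    rcases RC.grid_adj_cases hadj with ⟨hrow, -⟩ | ⟨hcol, -⟩
    · exact absurd (huniq _ hf hm (RC.horizEdge_mk.mpr hrow)) hfe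
    · exact ⟨s(v, u), hf, hm, RC.vertEdge_mk.mpr hcol⟩
  by_cases h1 : f₁ = e₁
  · exact key f₂ hf₂ hm₂ (fun h => hne (h1.trans h.symm))
  · exact key f₁ hf₁ hm₁ h1

/-! ### Each row containing a horizontal edge contains two turn cells -/

lemma RC.row_two_turns {n m : ℕ} {v₀ : Fin n × Fin m} {w : (gridGraph n m).Walk v₀ v₀}
    (hw : w.IsCycle) (i : Fin n)
    (hrow : ∃ j₁ j₂ : Fin m, (j₁ : ℕ) + 1 = (j₂ : ℕ) ∧ s(((i, j₁) : Fin n × Fin m), (i, j₂)) ∈ w.edges) :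
    ∃ c₁ c₂ : Fin n × Fin m, c₁ ≠ c₂ ∧ c₁.1 = i ∧ c₂.1 = i ∧
      IsTurnCell w c₁ ∧ IsTurnCell w c₂ := by
  classical
  set P : ℕ → Prop := fun j => ∃ (hj : j < m) (hj' : j + 1 < m),
    s(((i, ⟨j, hj⟩) : Fin n × Fin m), (i, ⟨j + 1, hj'⟩)) ∈ w.edges with hP
  have hex : ∃ j, P j := by
    obtain ⟨j₁, j₂, hj, he⟩ := hrow
    refine ⟨(j₁ : ℕ), j₁.isLt, hj ▸ j₂.isLt, ?_⟩
    have h1 : (⟨(j₁ : ℕ), j₁.isLt⟩ : Fin m) = j₁ := rfl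
    have h2 : (⟨(j₁ : ℕ) + 1, hj ▸ j₂.isLt⟩ : Fin m) = j₂ := Fin.ext hj
    rw [h1, h2]
    exact he
  -- smallest horizontal edge position in the row
  let j₁ := Nat.find hex
  obtain ⟨hj₁, hj₁', he₁⟩ := Nat.find_spec hex
  -- largest horizontal edge position in the row
  let j₂ := Nat.findGreatest P m
  have hPj₂ : P j₂ := Nat.findGreatest_spec (le_of_lt hj₁) (Nat.find_spec hex)
  obtain ⟨hj₂, hj₂', he₂⟩ := hPj₂
  have hle : j₁ ≤ j₂ := Nat.le_findGreatest (le_of_lt hj₁) (Nat.find_spec hex)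
  set c₁ : Fin n × Fin m := (i, ⟨j₁, hj₁⟩) with hc₁
  set c₂ : Fin n × Fin m := (i, ⟨j₂ + 1, hj₂'⟩) with hc₂
  have hturn₁ : IsTurnCell w c₁ := by
    refine RC.turn_of_unique_horiz hw he₁ (Sym2.mem_mk_left _ _) (RC.horizEdge_mk.mpr rfl) ?_
    intro f hf hm hhf
    obtain ⟨u, rfl, hadj⟩ := RC.incident_cases hf hm
    rcases RC.grid_adj_cases hadj with ⟨hrow', hcase⟩ | ⟨hcol, hcase⟩
    · rcases hcase with h | h
      · -- u is the right neighbour: f is the minimal edge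
        have hu : u = (i, ⟨j₁ + 1, hj₁'⟩) := by
          refine Prod.ext hrow'.symm.symm.symm (Fin.ext ?_)
          simpa using h.symm
        rw [hu]
      · -- u is the left neighbour: contradicts minimality
        exfalso
        have hlt : (u.2 : ℕ) < j₁ := by have h' : (u.2 : ℕ) + 1 = j₁ := h; omega
        refine Nat.find_min hex hlt ⟨u.2.isLt, ?_, ?_⟩
        · simpa using h ▸ hj₁
        · have hu : (⟨(u.2 : ℕ), u.2.isLt⟩ : Fin m) = u.2 := rfl
          have hv : ((i, ⟨(u.2 : ℕ) + 1, by simpa using h ▸ hj₁⟩) : Fin n × Fin m) = c₁ := by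
            refine Prod.ext rfl (Fin.ext ?_)
            simpa using h
          have hueq : ((i, (⟨(u.2 : ℕ), u.2.isLt⟩ : Fin m)) : Fin n × Fin m) = u := by
            refine Prod.ext hrow' rfl
          rw [hv, hueq, Sym2.eq_swap]
          exact hf
    · -- vertical edge is not horizontal
      exfalso
      rcases RC.horizEdge_mk.mp hhf with hr
      have : c₁ = u := Prod.ext hr hcol
      rcases hcase with h | h <;> (rw [← this] at h; omega)
  have hturn₂ : IsTurnCell w c₂ := by
    have hm₂ : c₂ ∈ s(((i, ⟨j₂, hj₂⟩) : Fin n × Fin m), (i, ⟨j₂ + 1, hj₂'⟩)) :=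
      Sym2.mem_mk_right _ _
    refine RC.turn_of_unique_horiz hw he₂ hm₂ (RC.horizEdge_mk.mpr rfl) ?_
    intro f hf hm hhf
    obtain ⟨u, rfl, hadj⟩ := RC.incident_cases hf hm
    rcases RC.grid_adj_cases hadj with ⟨hrow', hcase⟩ | ⟨hcol, hcase⟩
    · rcases hcase with h | h
      · -- u is the right neighbour of c₂: contradicts maximality
        exfalso
        have hgt : j₂ < j₂ + 1 := Nat.lt_succ_self _
        have h2m : j₂ + 1 ≤ m := le_of_lt hj₂'
        refine Nat.findGreatest_is_greatest hgt h2m ?_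
        refine ⟨hj₂', by simpa using h ▸ u.2.isLt, ?_⟩
        have hueq : ((i, (⟨j₂ + 1 + 1, by simpa using h ▸ u.2.isLt⟩ : Fin m)) : Fin n × Fin m) = u := by
          refine Prod.ext hrow' (Fin.ext ?_)
          simpa using h
        have hveq : ((i, (⟨j₂ + 1, hj₂'⟩ : Fin m)) : Fin n × Fin m) = c₂ := rfl
        rw [hveq, hueq]
        exact hf
      · -- u is the left neighbour: f is the maximal edge
        have hu : u = (i, ⟨j₂, hj₂⟩) := by
          refine Prod.ext hrow'.symm (Fin.ext ?_)
          have h' : (u.2 : ℕ) + 1 = j₂ + 1 := h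
          show (u.2 : ℕ) = j₂; omega
        rw [hu, Sym2.eq_swap]
    · exfalso
      rcases RC.horizEdge_mk.mp hhf with hr
      have : c₂ = u := Prod.ext hr hcol
      rcases hcase with h | h <;> (rw [← this] at h; omega)
  refine ⟨c₁, c₂, ?_, rfl, rfl, hturn₁, hturn₂⟩
  intro hcc
  have : j₁ = j₂ + 1 := congrArg (fun c => (c.2 : ℕ)) hcc
  omega

/-! ### Counting -/

lemma RC.count_pairs {N : ℕ} (T : Set (Fin N × Fin N)) (coord : Fin N × Fin N → Fin N)
    (t₁ t₂ : Fin N → Fin N × Fin N) (h₁ : ∀ k, t₁ k ∈ T) (h₂ : ∀ k, t₂ k ∈ T)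
    (hne : ∀ k, t₁ k ≠ t₂ k) (hc₁ : ∀ k, coord (t₁ k) = k) (hc₂ : ∀ k, coord (t₂ k) = k) :
    2 * N ≤ T.ncard := by
  classical
  set f : Fin N × Bool → Fin N × Fin N := fun p => if p.2 then t₁ p.1 else t₂ p.1 with hf
  have hinj : Function.Injective f := by
    rintro ⟨k, b⟩ ⟨k', b'⟩ h
    cases b <;> cases b' <;>
      simp only [hf, if_true, if_false, Bool.false_eq_true, ite_true, ite_false] at h
    · have hk : k = k' := by
        have := congrArg coord h; rwa [hc₂, hc₂] at this
      simp [hk]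
    · have hk : k = k' := by
        have := congrArg coord h; rwa [hc₂, hc₁] at this
      subst hk
      exact absurd h.symm (hne k)
    · have hk : k = k' := by
        have := congrArg coord h; rwa [hc₁, hc₂] at this
      subst hk
      exact absurd h (hne k)
    · have hk : k = k' := by
        have := congrArg coord h; rwa [hc₁, hc₁] at this
      simp [hk]
  have hsub : Set.range f ⊆ T := by
    rintro x ⟨⟨k, b⟩, rfl⟩
    cases b
    · exact h₂ k
    · exact h₁ k
  calc 2 * N = Nat.card (Fin N × Bool) := by
        simp [Nat.card_eq_fintype_card]
        ring
    _ = Nat.card (Set.range f) := (Nat.card_range_of_injective hinj).symm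
    _ = (Set.range f).ncard := Nat.card_coe_set_eq _
    _ ≤ T.ncard := Set.ncard_le_ncard hsub (Set.toFinite T)

/-! ### Swapping coordinates -/

def RC.swapIso (n m : ℕ) : gridGraph n m ≃g gridGraph m n where
  toEquiv := Equiv.prodComm _ _
  map_rel_iff' := by
    intro a b
    simp only [gridGraph, SimpleGraph.fromRel_adj, Equiv.prodComm_apply, Prod.swap,
      ne_eq, Prod.ext_iff, Prod.mk.injEq]
    tauto

lemma RC.turn_swap {n m : ℕ} {v₀ : Fin n × Fin m} {w : (gridGraph n m).Walk v₀ v₀}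
    {c : Fin m × Fin n}
    (h : IsTurnCell (w.map (RC.swapIso n m).toHom) c) : IsTurnCell w c.swap := by
  obtain ⟨⟨e, he, hce, hh⟩, ⟨e', he', hce', hv⟩⟩ := h
  rw [Walk.edges_map, List.mem_map] at he he'
  obtain ⟨e₀, he₀, rfl⟩ := he
  obtain ⟨e₀', he₀', rfl⟩ := he'
  constructor
  · -- the vertical edge of the swapped walk gives a horizontal edge
    revert hce' hv
    induction e₀' using Sym2.ind with
    | _ a b =>
      intro hce' hv
      refine ⟨s(a, b), he₀', ?_, ?_⟩
      · have : Sym2.map (RC.swapIso n m).toHom s(a, b) = s(a.swap, b.swap) := by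
          simp [Sym2.map_pair_eq, RC.swapIso]
        rw [this, Sym2.mem_iff] at hce'
        rcases hce' with rfl | rfl <;> simp
      · have : Sym2.map (RC.swapIso n m).toHom s(a, b) = s(a.swap, b.swap) := by
          simp [Sym2.map_pair_eq, RC.swapIso]
        rw [this, RC.vertEdge_mk] at hv
        exact RC.horizEdge_mk.mpr hv
  · revert hce hh
    induction e₀ using Sym2.ind with
    | _ a b =>
      intro hce hh
      refine ⟨s(a, b), he₀, ?_, ?_⟩
      · have : Sym2.map (RC.swapIso n m).toHom s(a, b) = s(a.swap, b.swap) := by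
          simp [Sym2.map_pair_eq, RC.swapIso]
        rw [this, Sym2.mem_iff] at hce
        rcases hce with rfl | rfl <;> simp
      · have : Sym2.map (RC.swapIso n m).toHom s(a, b) = s(a.swap, b.swap) := by
          simp [Sym2.map_pair_eq, RC.swapIso]
        rw [this, RC.horizEdge_mk] at hh
        exact RC.vertEdge_mk.mpr hh

/-! ### Dichotomy: every row has a horizontal edge, or every column a vertical one -/

lemma RC.rows_or_cols {n m : ℕ} {v₀ : Fin n × Fin m} {w : (gridGraph n m).Walk v₀ v₀}
    (hw : w.IsHamiltonianCycle) :
    (∀ i : Fin n, ∃ j₁ j₂ : Fin m, (j₁ : ℕ) + 1 = (j₂ : ℕ) ∧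
        s(((i, j₁) : Fin n × Fin m), (i, j₂)) ∈ w.edges) ∨
    (∀ j : Fin m, ∃ i₁ i₂ : Fin n, (i₁ : ℕ) + 1 = (i₂ : ℕ) ∧
        s(((i₁, j) : Fin n × Fin m), (i₂, j)) ∈ w.edges) := by
  classical
  by_contra hcon
  push_neg at hcon
  obtain ⟨⟨i₀, hi₀⟩, ⟨j₀, hj₀⟩⟩ := hcon
  set v : Fin n × Fin m := (i₀, j₀) with hv
  have hvsup : v ∈ w.support := hw.mem_support v
  obtain ⟨e, he, -, -, hme, -, -⟩ := RC.two_incident hw.isCycle hvsup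
  obtain ⟨u, rfl, hadj⟩ := RC.incident_cases he hme
  rcases RC.grid_adj_cases hadj with ⟨hr, hcase⟩ | ⟨hc, hcase⟩
  · rcases hcase with h | h
    · refine hi₀ j₀ u.2 (by simpa using h) ?_
      have hu : ((i₀, u.2) : Fin n × Fin m) = u := Prod.ext hr rfl
      rwa [hu]
    · refine hi₀ u.2 j₀ (by simpa using h) ?_
      have hu : ((i₀, u.2) : Fin n × Fin m) = u := Prod.ext hr rfl
      rw [hu, Sym2.eq_swap]
      exact he
  · rcases hcase with h | h
    · refine hj₀ i₀ u.1 (by simpa using h) ?_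
      have hu : ((u.1, j₀) : Fin n × Fin m) = u := Prod.ext rfl hc
      rwa [hu]
    · refine hj₀ u.1 i₀ (by simpa using h) ?_
      have hu : ((u.1, j₀) : Fin n × Fin m) = u := Prod.ext rfl hc
      rw [hu, Sym2.eq_swap]
      exact he

/-- Every rook circuit on a `2n × 2n` chessboard has at least `4n` turn-cells. -/
theorem min_turns_square (n : ℕ) (v₀ : Fin (2 * n) × Fin (2 * n))
    (w : (gridGraph (2 * n) (2 * n)).Walk v₀ v₀) (hw : w.IsHamiltonianCycle) :
    4 * n ≤ {v : Fin (2 * n) × Fin (2 * n) | IsTurnCell w v}.ncard := by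
  classical
  have key : 2 * (2 * n) ≤ {v : Fin (2 * n) × Fin (2 * n) | IsTurnCell w v}.ncard := by
    rcases RC.rows_or_cols hw with hr | hc
    · choose c₁ c₂ hne h1 h2 ht1 ht2 using fun i => RC.row_two_turns hw.isCycle i (hr i)
      exact RC.count_pairs _ Prod.fst c₁ c₂ ht1 ht2 hne h1 h2
    · set w' := w.map (RC.swapIso (2 * n) (2 * n)).toHom with hw'def
      have hw' : w'.IsHamiltonianCycle :=
        hw.map (RC.swapIso (2 * n) (2 * n)).toEquiv.bijective
      have hr' : ∀ i : Fin (2 * n), ∃ j₁ j₂ : Fin (2 * n), (j₁ : ℕ) + 1 = (j₂ : ℕ) ∧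
          s(((i, j₁) : Fin (2 * n) × Fin (2 * n)), (i, j₂)) ∈ w'.edges := by
        intro i
        obtain ⟨i₁, i₂, hi, he⟩ := hc i
        refine ⟨i₁, i₂, hi, ?_⟩
        rw [hw'def, Walk.edges_map]
        refine List.mem_map.mpr ⟨s(((i₁, i) : Fin (2 * n) × Fin (2 * n)), (i₂, i)), he, ?_⟩
        simp [Sym2.map_pair_eq, RC.swapIso]
      choose c₁ c₂ hne h1 h2 ht1 ht2 using fun i => RC.row_two_turns hw'.isCycle i (hr' i)
      refine RC.count_pairs _ Prod.snd (fun i => (c₁ i).swap) (fun i => (c₂ i).swap)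
        (fun i => RC.turn_swap (ht1 i)) (fun i => RC.turn_swap (ht2 i))
        (fun i h => hne i (Prod.swap_injective h)) (fun i => h1 i) (fun i => h2 i)
  linarith
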